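/- Let δ ∈ (0,1), 2 ≤ d ≤ n/12, 1 ≤ k ≤ δ·n/(4ed), γ_k = (2ekd/(δn))^{δd}, and let ℓ ≤ k. Let I ⊆ [n] with |I| ≤ n/8 and H ⊆ [n]×[n]. Then for every pair of subsets J ⊆ S ⊆ [n]∖I with |S| = k and |J| = ℓ, one has |Γ(S,J,δ) ∩ D(I,H)| ≤ γ_k^ℓ · |D(I,H)|. -/

import Mathlib

/-!
Peel off the largest vertex `j` of `J` and condition on all in-edges of
`W = {i ∈ S | i < j} ∪ I`. Inside a class `D(W, F)` the events for the other vertices of `J`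
are fixed, while the event for `j` says that `j` has at least `δ d` in-neighbours in the fixed
set `U = ⋃_{i ∈ S, i < j} N^in(i)`, with `|U| ≤ k d`. A switching `v → j, w → z ⇝ v → z, w → j`
(with `z ∉ W ∪ {j}`) moves between the layers `a_s` of graphs with `s` such in-neighbours and
gives `(s + 1) m a_{s+1} ≤ |U| d² a_s` with `m ≈ n d / 2`, so
`a_s ≤ (|U| d² / m)^s / s! · |D(W, F)|`. Stirling's bound turns the tail `s ≥ δ d` into at most
`γ_k |D(W, F)|`; summing over the classes and inducting on `|J|` gives `γ_k^ℓ`.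
-/

open Finset
open scoped Classical

/-- `Dreg n d` is the set of `d`-regular digraphs on `n` vertices, encoded by their
Bool adjacency matrices: `G i j = true` iff there is an edge from `i` to `j`. -/
def Dreg (n d : ℕ) : Finset (Fin n → Fin n → Bool) :=
  Finset.univ.filter fun G =>
    (∀ i, (Finset.univ.filter fun j => G i j = true).card = d) ∧
    (∀ j, (Finset.univ.filter fun i => G i j = true).card = d)

/-- `Dcond n d S F` is the set of graphs in `Dreg n d` whose set of in-edges of `S`
(edges `(i,j)` with `j ∈ S`) equals `F`. -/
def Dcond (n d : ℕ) (S : Finset (Fin n)) (F : Finset (Fin n × Fin n)) :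
    Finset (Fin n → Fin n → Bool) :=
  (Dreg n d).filter fun G =>
    (Finset.univ.filter fun p : Fin n × Fin n => G p.1 p.2 = true ∧ p.2 ∈ S) = F

/-- `GammaSet n d δ S J`: graphs in which every `j ∈ J` has at least `δ d` common
in-neighbors with the set of vertices of `S` preceding `j`. -/
noncomputable def GammaSet (n d : ℕ) (δ : ℝ) (S J : Finset (Fin n)) :
    Finset (Fin n → Fin n → Bool) :=
  (Dreg n d).filter fun G => ∀ j ∈ J,
    δ * d ≤ ((Finset.univ.filter fun v : Fin n =>
      ∃ i ∈ S, i < j ∧ G v i = true ∧ G v j = true).card : ℝ)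

namespace RegularDigraph

open scoped Nat

variable {n d : ℕ}

def inNbrs (G : Fin n → Fin n → Bool) (j : Fin n) : Finset (Fin n) := {i | G i j = true}

def outNbrs (G : Fin n → Fin n → Bool) (i : Fin n) : Finset (Fin n) := {j | G i j = true}

def inEdges (G : Fin n → Fin n → Bool) (W : Finset (Fin n)) : Finset (Fin n × Fin n) :=
  {p | G p.1 p.2 = true ∧ p.2 ∈ W}

/-- The set `⋃_{i ∈ S, i < j} C^in_G(i, j)` of the paper. -/
def commonInNbrsBelow (G : Fin n → Fin n → Bool) (S : Finset (Fin n)) (j : Fin n) :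
    Finset (Fin n) :=
  {v | ∃ i ∈ S, i < j ∧ G v i = true ∧ G v j = true}

section Basic

variable {G G' : Fin n → Fin n → Bool} {W : Finset (Fin n)}

@[simp] lemma mem_inNbrs {i j : Fin n} : i ∈ inNbrs G j ↔ G i j = true := by simp [inNbrs]

@[simp] lemma mem_outNbrs {i j : Fin n} : j ∈ outNbrs G i ↔ G i j = true := by simp [outNbrs]

@[simp] lemma mem_inEdges {p : Fin n × Fin n} : p ∈ inEdges G W ↔ G p.1 p.2 = true ∧ p.2 ∈ W := by
  simp [inEdges]

lemma mem_Dreg : G ∈ Dreg n d ↔ (∀ i, #(outNbrs G i) = d) ∧ ∀ j, #(inNbrs G j) = d := by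
  simp [Dreg, outNbrs, inNbrs]

lemma mem_Dcond {F : Finset (Fin n × Fin n)} :
    G ∈ Dcond n d W F ↔ G ∈ Dreg n d ∧ inEdges G W = F := by
  simp [Dcond, inEdges]

lemma mem_GammaSet {δ : ℝ} {S J : Finset (Fin n)} :
    G ∈ GammaSet n d δ S J ↔ G ∈ Dreg n d ∧ ∀ j ∈ J, δ * d ≤ #(commonInNbrsBelow G S j) := by
  simp [GammaSet, commonInNbrsBelow]

lemma inEdges_eq_inEdges_iff :
    inEdges G W = inEdges G' W ↔ ∀ v, ∀ c ∈ W, G v c = G' v c := by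
  refine ⟨fun h v c hc => ?_, fun h => ?_⟩
  · have := congrArg (((v, c) : Fin n × Fin n) ∈ ·) h
    simp only [mem_inEdges, hc, and_true, eq_iff_iff] at this
    exact Bool.eq_iff_iff.mpr this
  · ext p
    simp only [mem_inEdges]
    exact and_congr_left fun hp => by rw [h p.1 p.2 hp]

end Basic

lemma card_insert_erase_of_mem_of_notMem {α : Type*} [DecidableEq α] {s : Finset α} {v w : α}
    (hv : v ∈ s) (hw : w ∉ s) : #(insert w (s.erase v)) = #s := by
  rw [card_insert_of_notMem fun h => hw (mem_of_mem_erase h), card_erase_add_one hv]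

def switch (G : Fin n → Fin n → Bool) (v j w z : Fin n) : Fin n → Fin n → Bool := fun a b =>
  if (a, b) = (v, j) ∨ (a, b) = (w, z) then false
  else if (a, b) = (v, z) ∨ (a, b) = (w, j) then true
  else G a b

section Switch

variable {G : Fin n → Fin n → Bool} {v j w z : Fin n}

lemma switch_comm : switch G v j w z = switch G w z v j := by
  funext a b
  simp only [switch, or_comm]

lemma switch_apply_of_col_ne {a b : Fin n} (hj : b ≠ j) (hz : b ≠ z) :
    switch G v j w z a b = G a b := by
  simp [switch, hj, hz]

lemma switch_apply_of_row_ne {a b : Fin n} (hv : a ≠ v) (hw : a ≠ w) :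
    switch G v j w z a b = G a b := by
  simp [switch, hv, hw]

variable (hvw : v ≠ w) (hjz : j ≠ z)
include hvw hjz

lemma switch_apply_new_edges : switch G v j w z w j = true ∧ switch G v j w z v z = true := by
  simp [switch, hvw, hvw.symm, hjz, hjz.symm]

lemma switch_switch (hvj : G v j = true) (hwz : G w z = true) (hvz : G v z = false)
    (hwj : G w j = false) : switch (switch G v j w z) v z w j = G := by
  funext a b
  by_cases ha : a = v ∨ a = w
  · by_cases hb : b = j ∨ b = z
    · rcases ha with rfl | rfl <;> rcases hb with rfl | rfl <;>
        simp [switch, hvw.symm, hjz.symm, *]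
    · push Not at hb
      simp [switch, hb.1, hb.2]
  · push Not at ha
    simp [switch, ha.1, ha.2]

lemma inNbrs_switch_left : inNbrs (switch G v j w z) j = insert w ((inNbrs G j).erase v) := by
  ext a
  by_cases hav : a = v
  · subst hav; simp [switch, hvw]
  · by_cases haw : a = w
    · subst haw; simp [switch, hvw.symm, hjz]
    · simp [switch, hav, haw]

lemma outNbrs_switch_left : outNbrs (switch G v j w z) v = insert z ((outNbrs G v).erase j) := by
  ext b
  by_cases hbj : b = j
  · subst hbj; simp [switch, hjz]
  · by_cases hbz : b = z
    · subst hbz; simp [switch, hvw, hbj]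
    · simp [switch, hbj, hbz]

lemma inNbrs_switch_right : inNbrs (switch G v j w z) z = insert v ((inNbrs G z).erase w) := by
  rw [switch_comm]; exact inNbrs_switch_left hvw.symm hjz.symm

lemma outNbrs_switch_right : outNbrs (switch G v j w z) w = insert j ((outNbrs G w).erase z) := by
  rw [switch_comm]; exact outNbrs_switch_left hvw.symm hjz.symm

lemma switch_mem_Dreg (hG : G ∈ Dreg n d) (hvj : G v j = true) (hwz : G w z = true)
    (hvz : G v z = false) (hwj : G w j = false) : switch G v j w z ∈ Dreg n d := by
  rw [mem_Dreg] at hG ⊢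
  refine ⟨fun a => ?_, fun b => ?_⟩
  · by_cases hav : a = v
    · subst hav
      rw [outNbrs_switch_left hvw hjz, card_insert_erase_of_mem_of_notMem (by simpa)
        (by simpa), hG.1]
    by_cases haw : a = w
    · subst haw
      rw [outNbrs_switch_right hvw hjz, card_insert_erase_of_mem_of_notMem (by simpa)
        (by simpa), hG.1]
    have : outNbrs (switch G v j w z) a = outNbrs G a := by
      ext b; simp [switch_apply_of_row_ne hav haw]
    rw [this, hG.1]
  · by_cases hbj : b = j
    · subst hbj
      rw [inNbrs_switch_left hvw hjz, card_insert_erase_of_mem_of_notMem (by simpa)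
        (by simpa), hG.2]
    by_cases hbz : b = z
    · subst hbz
      rw [inNbrs_switch_right hvw hjz, card_insert_erase_of_mem_of_notMem (by simpa)
        (by simpa), hG.2]
    have : inNbrs (switch G v j w z) b = inNbrs G b := by
      ext a; simp [switch_apply_of_col_ne hbj hbz]
    rw [this, hG.2]

end Switch

lemma inEdges_switch {G : Fin n → Fin n → Bool} {W : Finset (Fin n)} {v j w z : Fin n}
    (hj : j ∉ W) (hz : z ∉ W) : inEdges (switch G v j w z) W = inEdges G W :=
  inEdges_eq_inEdges_iff.mpr fun _ _ hc =>
    switch_apply_of_col_ne (ne_of_mem_of_not_mem hc hj) (ne_of_mem_of_not_mem hc hz)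

lemma card_filter_fst_mem {α β : Type*} [Fintype α] [Fintype β] [DecidableEq α]
    [DecidableEq β] (A : Finset α) (R : α → Finset β) :
    #{p : α × β | p.1 ∈ A ∧ p.2 ∈ R p.1} = ∑ a ∈ A, #(R a) := by
  rw [← card_sigma]
  exact card_nbij' (fun p => ⟨p.1, p.2⟩) (fun p => (p.1, p.2)) (fun _ => by simp)
    (fun _ => by simp) (fun _ _ => rfl) (fun _ _ => rfl)

lemma card_filter_snd_mem {α β : Type*} [Fintype α] [Fintype β] [DecidableEq α]
    [DecidableEq β] (B : Finset β) (R : β → Finset α) :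
    #{p : α × β | p.2 ∈ B ∧ p.1 ∈ R p.2} = ∑ b ∈ B, #(R b) := by
  rw [← card_sigma]
  exact card_nbij' (fun p => ⟨p.2, p.1⟩) (fun p => (p.2, p.1)) (fun _ => by simp)
    (fun _ => by simp) (fun _ _ => rfl) (fun _ _ => rfl)

section Switching

variable {W U : Finset (Fin n)} {j : Fin n} {G : Fin n → Fin n → Bool}

/-- The pairs `(w, z)` for which `switch G v j w z` stays in the same class `Dcond n d W F`
and, when `v ∈ inNbrs G j ∩ U`, removes exactly `v` from `inNbrs G j ∩ U`. -/
def switchPartners (W U : Finset (Fin n)) (j : Fin n) (G : Fin n → Fin n → Bool) (v : Fin n) :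
    Finset (Fin n × Fin n) :=
  {p | p.2 ∉ insert j W ∧ G p.1 p.2 = true ∧ p.1 ∉ U ∧ G p.1 j = false ∧ G v p.2 = false}

lemma card_switchPartners (hG : G ∈ Dreg n d) (hjW : j ∉ W) (v : Fin n) :
    n * d ≤ #(switchPartners W U j G v) + #U * d + 2 * (d * d) + (#W + 1) * d := by
  obtain ⟨hout, hin⟩ := mem_Dreg.mp hG
  let E : Finset (Fin n × Fin n) := {p | p.2 ∈ (insert j W)ᶜ ∧ p.1 ∈ inNbrs G p.2}
  have hE : #E + (#W + 1) * d = n * d := by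
    have : #W + 1 ≤ n := by simpa [hjW] using card_le_univ (insert j W)
    rw [card_filter_snd_mem, sum_const_nat fun z _ => hin z, card_compl,
      card_insert_of_notMem hjW, Fintype.card_fin, ← add_mul, Nat.sub_add_cancel this]
  let B₁ : Finset (Fin n × Fin n) := {p | p.1 ∈ U ∧ p.2 ∈ outNbrs G p.1}
  let B₂ : Finset (Fin n × Fin n) := {p | p.1 ∈ inNbrs G j ∧ p.2 ∈ outNbrs G p.1}
  let B₃ : Finset (Fin n × Fin n) := {p | p.2 ∈ outNbrs G v ∧ p.1 ∈ inNbrs G p.2}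
  have hsub : E ⊆ switchPartners W U j G v ∪ (B₁ ∪ B₂ ∪ B₃) := by
    intro p hp
    simp only [E, B₁, B₂, B₃, switchPartners, mem_filter, mem_univ, true_and, mem_union,
      mem_compl, mem_inNbrs, mem_outNbrs, Bool.eq_false_iff] at hp ⊢
    tauto
  have h₁ : #B₁ = #U * d := by
    simp only [B₁, card_filter_fst_mem, sum_const_nat fun a _ => hout a]
  have h₂ : #B₂ = d * d := by
    simp only [B₂, card_filter_fst_mem, sum_const_nat fun a _ => hout a, hin j]
  have h₃ : #B₃ = d * d := by
    simp only [B₃, card_filter_snd_mem, sum_const_nat fun a _ => hin a, hout v]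
  have := card_union_le B₁ B₂
  have := card_union_le (B₁ ∪ B₂) B₃
  have := (card_le_card hsub).trans (card_union_le _ _)
  lia

lemma mem_switchPartners {v w z : Fin n} :
    (w, z) ∈ switchPartners W U j G v ↔
      z ∉ insert j W ∧ G w z = true ∧ w ∉ U ∧ G w j = false ∧ G v z = false := by
  simp [switchPartners]

def switchings (W U : Finset (Fin n)) (j : Fin n) (G : Fin n → Fin n → Bool) :
    Finset (Fin n × Fin n × Fin n) :=
  {t | t.1 ∈ inNbrs G j ∩ U ∧ t.2 ∈ switchPartners W U j G t.1}

lemma card_mul_le_card_switchings {m : ℕ} (hG : G ∈ Dreg n d) (hjW : j ∉ W)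
    (hm : m + #U * d + 2 * (d * d) + (#W + 1) * d ≤ n * d) :
    #(inNbrs G j ∩ U) * m ≤ #(switchings W U j G) := by
  rw [switchings, card_filter_fst_mem, ← smul_eq_mul]
  refine card_nsmul_le_sum _ _ _ fun v _ => ?_
  have := card_switchPartners (U := U) hG hjW v
  lia

section
variable {v w z : Fin n} (ht : (v, w, z) ∈ switchings W U j G)
include ht

lemma switch_mem_Dcond {F : Finset (Fin n × Fin n)} (hjW : j ∉ W) (hG : G ∈ Dcond n d W F) :
    switch G v j w z ∈ Dcond n d W F := by
  simp only [switchings, mem_filter, mem_univ, true_and, mem_inter, mem_inNbrs,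
    mem_switchPartners, mem_insert, not_or] at ht
  obtain ⟨⟨hvj, hvU⟩, ⟨hzj, hzW⟩, hwz, hwU, hwj, hvz⟩ := ht
  rw [mem_Dcond] at hG ⊢
  exact ⟨switch_mem_Dreg (ne_of_mem_of_not_mem hvU hwU) (Ne.symm hzj) hG.1 hvj hwz hvz hwj,
    (inEdges_switch hjW hzW).trans hG.2⟩

lemma card_inNbrs_switch_inter_add_one :
    #(inNbrs (switch G v j w z) j ∩ U) + 1 = #(inNbrs G j ∩ U) := by
  simp only [switchings, mem_filter, mem_univ, true_and, mem_switchPartners] at ht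
  obtain ⟨hv, hz, -, hwU, -, -⟩ := ht
  have hvw := ne_of_mem_of_not_mem (mem_inter.mp hv).2 hwU
  rw [inNbrs_switch_left hvw (ne_of_mem_of_not_mem (mem_insert_self j W) hz),
    insert_inter_of_notMem hwU, erase_inter, card_erase_add_one hv]

lemma switch_switch_of_mem_switchings : switch (switch G v j w z) v z w j = G := by
  simp only [switchings, mem_filter, mem_univ, true_and, mem_inter, mem_inNbrs,
    mem_switchPartners] at ht
  obtain ⟨⟨hvj, hvU⟩, hz, hwz, hwU, hwj, hvz⟩ := ht
  exact switch_switch (ne_of_mem_of_not_mem hvU hwU)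
    (ne_of_mem_of_not_mem (mem_insert_self j W) hz) hvj hwz hvz hwj

lemma switch_apply_of_mem_switchings :
    switch G v j w z w j = true ∧ switch G v j w z v z = true := by
  simp only [switchings, mem_filter, mem_univ, true_and, mem_inter, mem_switchPartners] at ht
  obtain ⟨⟨-, hvU⟩, hz, -, hwU, -, -⟩ := ht
  have hvw := ne_of_mem_of_not_mem hvU hwU
  have hjz := ne_of_mem_of_not_mem (mem_insert_self j W) hz
  exact switch_apply_new_edges hvw hjz

end

/-- The switching inequality: each graph with `s + 1` in-neighbours of `j` in `U` admits at least
`(s + 1) m` switchings, each graph with `s` of them arises from at most `#U d²` switchings, and a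
switching is undone by switching back. -/
lemma succ_mul_card_le_switching {F : Finset (Fin n × Fin n)} {m : ℕ} (hjW : j ∉ W)
    (hm : m + #U * d + 2 * (d * d) + (#W + 1) * d ≤ n * d) (s : ℕ) :
    (s + 1) * m * #{G ∈ Dcond n d W F | #(inNbrs G j ∩ U) = s + 1}
      ≤ #U * (d * d) * #{G ∈ Dcond n d W F | #(inNbrs G j ∩ U) = s} := by
  let targets (G : Fin n → Fin n → Bool) : Finset (Fin n × Fin n × Fin n) :=
    {t | t.1 ∈ U ∧ t.2 ∈ inNbrs G j ×ˢ outNbrs G t.1}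
  let P := {G ∈ Dcond n d W F | #(inNbrs G j ∩ U) = s + 1}.sigma (switchings W U j)
  let Q := {G ∈ Dcond n d W F | #(inNbrs G j ∩ U) = s}.sigma targets
  have hP : #{G ∈ Dcond n d W F | #(inNbrs G j ∩ U) = s + 1} * ((s + 1) * m) ≤ #P := by
    rw [card_sigma, ← smul_eq_mul]
    refine card_nsmul_le_sum _ _ _ fun G hG => ?_
    obtain ⟨hGD, hGs⟩ := mem_filter.mp hG
    exact hGs ▸ card_mul_le_card_switchings (mem_Dcond.mp hGD).1 hjW hm
  have hQ : #Q = #{G ∈ Dcond n d W F | #(inNbrs G j ∩ U) = s} * (#U * (d * d)) := by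
    rw [card_sigma]
    refine sum_const_nat fun G hG => ?_
    obtain ⟨hout, hin⟩ := mem_Dreg.mp (mem_Dcond.mp (mem_filter.mp hG).1).1
    rw [card_filter_fst_mem U fun v => inNbrs G j ×ˢ outNbrs G v]
    simp only [card_product, hout, hin, sum_const_nat]
  have hPQ : #P ≤ #Q := by
    refine card_le_card_of_injOn (fun q => ⟨switch q.1 q.2.1 j q.2.2.1 q.2.2.2, q.2⟩) ?_ ?_
    · rintro ⟨G, v, w, z⟩ hq
      obtain ⟨hG, ht⟩ := mem_sigma.mp hq
      obtain ⟨hGD, hGs⟩ := mem_filter.mp hG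
      have hvU := (mem_inter.mp (mem_filter.mp ht).2.1).2
      simp only [Q, targets, mem_coe, mem_sigma, mem_filter, mem_univ, true_and, mem_product,
        mem_inNbrs, mem_outNbrs]
      refine ⟨⟨switch_mem_Dcond ht hjW hGD, ?_⟩, hvU, switch_apply_of_mem_switchings ht⟩
      have := card_inNbrs_switch_inter_add_one ht
      lia
    · rintro ⟨G₁, v, w, z⟩ hq₁ ⟨G₂, v₂, w₂, z₂⟩ hq₂ h
      simp only [Sigma.mk.inj_iff, heq_eq_eq, Prod.mk.injEq] at h
      obtain ⟨hG, rfl, rfl, rfl⟩ := h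
      have h₁ : switch (switch G₁ v j w z) v z w j = G₁ :=
        switch_switch_of_mem_switchings (mem_sigma.mp hq₁).2
      have h₂ : switch (switch G₂ v j w z) v z w j = G₂ :=
        switch_switch_of_mem_switchings (mem_sigma.mp hq₂).2
      rw [← h₁, hG, h₂]
  calc (s + 1) * m * #{G ∈ Dcond n d W F | #(inNbrs G j ∩ U) = s + 1}
      ≤ #P := by rw [mul_comm]; exact hP
    _ ≤ #Q := hPQ
    _ = _ := by rw [hQ, mul_comm]

end Switching

lemma le_pow_div_factorial_mul {a : ℕ → ℝ} {x : ℝ} (hx : 0 ≤ x)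
    (h : ∀ s : ℕ, (s + 1) * a (s + 1) ≤ x * a s) (s : ℕ) : a s ≤ x ^ s / s ! * a 0 := by
  induction s with
  | zero => simp
  | succ s ih =>
    calc a (s + 1) ≤ x / (s + 1) * a s := by
          rw [div_mul_eq_mul_div, le_div_iff₀ (by positivity)]; linarith [h s]
      _ ≤ x / (s + 1) * (x ^ s / s ! * a 0) := by gcongr
      _ = x ^ (s + 1) / (s + 1)! * a 0 := by
          rw [Nat.factorial_succ]; push_cast; field_simp; ring

lemma pow_div_factorial_le_half_pow {x ρ : ℝ} {s : ℕ} (hs : s ≠ 0) (hx : 0 ≤ x)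
    (h : Real.exp 1 * x ≤ ρ * s) : x ^ s / s ! ≤ ρ ^ s / 2 := by
  have hsR : (1 : ℝ) ≤ s := by exact_mod_cast Nat.one_le_iff_ne_zero.mpr hs
  have hfac : 2 * (s / Real.exp 1) ^ s ≤ s ! := by
    refine le_trans ?_ (Stirling.le_factorial_stirling s)
    gcongr
    rw [Real.le_sqrt (by norm_num) (by positivity)]
    nlinarith [Real.pi_gt_three]
  have hxρ : x ≤ ρ * (s / Real.exp 1) := by
    rw [← mul_div_assoc, le_div_iff₀ (Real.exp_pos 1)]; linarith
  calc x ^ s / s ! ≤ (ρ * (s / Real.exp 1)) ^ s / (2 * (s / Real.exp 1) ^ s) := by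
        gcongr
        exact pow_nonneg (hx.trans hxρ) s
    _ = ρ ^ s / 2 := by rw [mul_pow]; field_simp

lemma card_filter_le_card_inNbrs_inter_le {W U : Finset (Fin n)} {j : Fin n}
    {F : Finset (Fin n × Fin n)} {m : ℕ} {ρ t : ℝ} (hjW : j ∉ W) (hm0 : 0 < m)
    (hm : m + #U * d + 2 * (d * d) + (#W + 1) * d ≤ n * d) (ht : 0 < t) (hρ0 : 0 < ρ)
    (hρ : ρ ≤ 1 / 2) (hU : Real.exp 1 * (#U * (d * d) / m) ≤ ρ * t) :
    (#{G ∈ Dcond n d W F | t ≤ #(inNbrs G j ∩ U)} : ℝ) ≤ ρ ^ t * #(Dcond n d W F) := by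
  set D := Dcond n d W F
  set x : ℝ := #U * (d * d) / m
  let a (s : ℕ) : ℝ := #{G ∈ D | #(inNbrs G j ∩ U) = s}
  have ha (s : ℕ) : a s ≤ x ^ s / s ! * #D := by
    refine (le_pow_div_factorial_mul (x := x) (by positivity) (fun s => ?_) s).trans ?_
    · have : ((s + 1) * m * a (s + 1) : ℝ) ≤ #U * (d * d) * a s := by
        simp only [a]; exact_mod_cast succ_mul_card_le_switching hjW hm s
      rw [show x * a s = #U * (d * d) * a s / m by ring, le_div_iff₀ (by positivity)]
      linarith
    · gcongr
      simp only [a]; exact_mod_cast card_filter_le _ _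
  have hsub : {G ∈ D | t ≤ #(inNbrs G j ∩ U)} ⊆
      (Ico ⌈t⌉₊ (n + 1)).biUnion fun s => {G ∈ D | #(inNbrs G j ∩ U) = s} := by
    intro G hG
    rw [mem_filter] at hG
    have : #(inNbrs G j ∩ U) ≤ n := (card_le_univ _).trans (Fintype.card_fin n).le
    simp only [mem_biUnion, mem_Ico, mem_filter]
    exact ⟨_, ⟨Nat.ceil_le.mpr hG.2, Nat.lt_succ_of_le this⟩, hG.1, rfl⟩
  calc (#{G ∈ D | t ≤ #(inNbrs G j ∩ U)} : ℝ) ≤ ∑ s ∈ Ico ⌈t⌉₊ (n + 1), a s := by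
        simp only [a]; exact_mod_cast (card_le_card hsub).trans card_biUnion_le
    _ ≤ ∑ s ∈ Ico ⌈t⌉₊ (n + 1), ρ ^ s / 2 * #D := by
        refine sum_le_sum fun s hs => (ha s).trans ?_
        have hts : t ≤ s := Nat.ceil_le.mp (mem_Ico.mp hs).1
        have hs0 : s ≠ 0 := by rintro rfl; simp at hts; linarith
        exact mul_le_mul_of_nonneg_right (pow_div_factorial_le_half_pow hs0 (by positivity)
          (hU.trans (by gcongr))) (by positivity)
    _ = (∑ s ∈ Ico ⌈t⌉₊ (n + 1), ρ ^ s) / 2 * #D := by rw [sum_div, sum_mul]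
    _ ≤ ρ ^ ⌈t⌉₊ / (1 - ρ) / 2 * #D := by
        gcongr
        exact geom_sum_Ico_le_of_lt_one hρ0.le (by linarith)
    _ ≤ ρ ^ ⌈t⌉₊ * #D := by
        gcongr
        rw [div_div, div_le_iff₀ (by linarith)]
        nlinarith [pow_pos hρ0 ⌈t⌉₊]
    _ ≤ ρ ^ t * #D := by
        gcongr
        rw [← Real.rpow_natCast]
        exact Real.rpow_le_rpow_of_exponent_ge hρ0 (by linarith) (Nat.le_ceil t)

lemma card_filter_mul_le_card_inNbrs_inter_le {δ : ℝ} {k : ℕ} {W U : Finset (Fin n)}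
    {j : Fin n} {F : Finset (Fin n × Fin n)} (hδ0 : 0 < δ) (hδ1 : δ < 1) (hd2 : 2 ≤ d)
    (hdn : (d : ℝ) ≤ n / 12) (hk0 : 0 < k) (hk : (k : ℝ) ≤ δ * n / (4 * Real.exp 1 * d))
    (hjW : j ∉ W) (hU : #U ≤ k * d) (hW : (#W : ℝ) + 1 ≤ k + n / 8) :
    (#{G ∈ Dcond n d W F | δ * d ≤ #(inNbrs G j ∩ U)} : ℝ)
      ≤ (2 * Real.exp 1 * k * d / (δ * n)) ^ (δ * d) * #(Dcond n d W F) := by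
  have he : (2.7 : ℝ) < Real.exp 1 := by linarith [Real.exp_one_gt_d9]
  have hdR : (2 : ℝ) ≤ d := by exact_mod_cast hd2
  have hkR : (0 : ℝ) < k := by exact_mod_cast hk0
  have hn : (24 : ℝ) ≤ n := by linarith
  have hkd : k * (4 * Real.exp 1 * d) ≤ δ * n := by
    rwa [le_div_iff₀ (by positivity)] at hk
  have hUR : (#U : ℝ) ≤ k * d := by exact_mod_cast hU
  -- Any `m` with `n d ≤ 2 m ≤ n d + 1` works: the lower bound serves the ratio condition, the
  -- upper one the switching budget.
  set m := (n * d + 1) / 2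
  have hm₁ : (n * d : ℝ) ≤ 2 * m := by exact_mod_cast (by omega : n * d ≤ 2 * m)
  have hm₂ : (2 * m : ℝ) ≤ n * d + 1 := by exact_mod_cast (by omega : 2 * m ≤ n * d + 1)
  refine card_filter_le_card_inNbrs_inter_le (m := m) hjW ?_ ?_ (by positivity) (by positivity)
    ?_ ?_
  · have : (0 : ℝ) < m := by nlinarith
    exact_mod_cast this
  · have : (m + #U * d + 2 * (d * d) + (#W + 1) * d : ℝ) ≤ n * d := by
      have hkn : 10.8 * (k * d : ℝ) ≤ n := by
        nlinarith [mul_pos hkR (by positivity : (0 : ℝ) < d)]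
      nlinarith [mul_le_mul_of_nonneg_right hUR (by positivity : (0 : ℝ) ≤ d),
        mul_le_mul_of_nonneg_right hW (by positivity : (0 : ℝ) ≤ d),
        mul_le_mul_of_nonneg_right hdn (by positivity : (0 : ℝ) ≤ d),
        mul_le_mul_of_nonneg_right hkn (by positivity : (0 : ℝ) ≤ d)]
    exact_mod_cast this
  · rw [div_le_iff₀ (by positivity)]
    nlinarith
  · rw [div_mul_eq_mul_div, mul_div_assoc', div_le_div_iff₀ (by nlinarith) (by positivity)]
    have : (#U : ℝ) * n ≤ k * 2 * m := by nlinarith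
    have := mul_le_mul_of_nonneg_left this (by positivity : (0 : ℝ) ≤ Real.exp 1 * δ * d ^ 3)
    nlinarith

lemma card_le_mul_card_of_forall_fiber {α β : Type*} [DecidableEq β] {B M : Finset α}
    {f : α → β} {c : ℝ} (hBM : B ⊆ M)
    (h : ∀ y ∈ M.image f, (#{a ∈ B | f a = y} : ℝ) ≤ c * #{a ∈ M | f a = y}) :
    (#B : ℝ) ≤ c * #M := by
  rw [card_eq_sum_card_fiberwise fun a ha => mem_image_of_mem f (hBM ha),
    card_eq_sum_card_fiberwise fun a ha => mem_image_of_mem f ha]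
  push_cast
  rw [mul_sum]
  exact sum_le_sum h

section Conditioning

variable {G G' : Fin n → Fin n → Bool} {V W : Finset (Fin n)}

lemma commonInNbrsBelow_congr {S : Finset (Fin n)} {j : Fin n}
    (h : ∀ v, ∀ c ∈ S, c ≤ j → G v c = G' v c) (hj : j ∈ S) :
    commonInNbrsBelow G S j = commonInNbrsBelow G' S j := by
  ext v
  simp only [commonInNbrsBelow, mem_filter, mem_univ, true_and]
  refine exists_congr fun i => and_congr_right fun hi => and_congr_right fun hij => ?_
  rw [h v i hi hij.le, h v j hj le_rfl]

lemma commonInNbrsBelow_eq_inNbrs_inter {S : Finset (Fin n)} {j : Fin n}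
    (h : ∀ v, ∀ c ∈ S, c < j → G v c = G' v c) :
    commonInNbrsBelow G S j = inNbrs G j ∩ {i ∈ S | i < j}.biUnion (inNbrs G') := by
  ext v
  simp only [commonInNbrsBelow, mem_filter, mem_univ, true_and, mem_inter, mem_inNbrs,
    mem_biUnion]
  constructor
  · rintro ⟨i, hi, hij, hvi, hvj⟩
    exact ⟨hvj, i, ⟨hi, hij⟩, (h v i hi hij).symm.trans hvi⟩
  · rintro ⟨hvj, i, ⟨hi, hij⟩, hvi⟩
    exact ⟨i, hi, hij, (h v i hi hij).trans hvi, hvj⟩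

lemma mem_GammaSet_of_inEdges_eq {δ : ℝ} {S J : Finset (Fin n)}
    (hG' : G' ∈ GammaSet n d δ S J) (hG : G ∈ Dreg n d) (h : inEdges G W = inEdges G' W)
    (hJS : J ⊆ S) (hW : ∀ j ∈ J, ∀ c ∈ S, c ≤ j → c ∈ W) : G ∈ GammaSet n d δ S J := by
  rw [mem_GammaSet] at hG' ⊢
  refine ⟨hG, fun j hj => ?_⟩
  rw [commonInNbrsBelow_congr (fun v c hc hcj => inEdges_eq_inEdges_iff.mp h v c
    (hW j hj c hc hcj)) (hJS hj)]
  exact hG'.2 j hj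

lemma mem_Dcond_of_inEdges_eq {F : Finset (Fin n × Fin n)} (hG' : G' ∈ Dcond n d V F)
    (hG : G ∈ Dreg n d) (h : inEdges G W = inEdges G' W) (hVW : V ⊆ W) : G ∈ Dcond n d V F := by
  rw [mem_Dcond] at hG' ⊢
  refine ⟨hG, (inEdges_eq_inEdges_iff.mpr fun v c hc => ?_).trans hG'.2⟩
  exact inEdges_eq_inEdges_iff.mp h v c (hVW hc)

end Conditioning

lemma card_filter_lt_union_add_one_le {α : Type*} [LinearOrder α] {S : Finset α} (I : Finset α)
    {j : α} (hjS : j ∈ S) : #({i ∈ S | i < j} ∪ I) + 1 ≤ #S + #I := by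
  have : #{i ∈ S | i < j} < #S := card_lt_card (filter_ssubset.mpr ⟨j, hjS, lt_irrefl j⟩)
  have := card_union_le {i ∈ S | i < j} I
  omega

lemma card_GammaSet_insert_inter_Dcond_le {δ : ℝ} {k : ℕ} {S J I : Finset (Fin n)}
    {H : Finset (Fin n × Fin n)} {j : Fin n} (hδ0 : 0 < δ) (hδ1 : δ < 1) (hd2 : 2 ≤ d)
    (hdn : (d : ℝ) ≤ n / 12) (hk : (k : ℝ) ≤ δ * n / (4 * Real.exp 1 * d))
    (hIcard : (#I : ℝ) ≤ n / 8) (hS : #S = k) (hjS : j ∈ S) (hjI : j ∉ I) (hJS : J ⊆ S)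
    (hJj : ∀ i ∈ J, i < j) :
    (#(GammaSet n d δ S (insert j J) ∩ Dcond n d I H) : ℝ)
      ≤ (2 * Real.exp 1 * k * d / (δ * n)) ^ (δ * d) * #(GammaSet n d δ S J ∩ Dcond n d I H) := by
  set W := {i ∈ S | i < j} ∪ I
  have hjW : j ∉ W := by simp [W, hjI]
  have hW : (#W : ℝ) + 1 ≤ k + n / 8 := by
    have : (#W : ℝ) + 1 ≤ k + #I := by exact_mod_cast hS ▸ card_filter_lt_union_add_one_le I hjS
    linarith
  refine card_le_mul_card_of_forall_fiber (f := (inEdges · W))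
    (inter_subset_inter (fun G hG => ?_) subset_rfl) fun F hF => ?_
  · rw [mem_GammaSet] at hG ⊢
    exact ⟨hG.1, fun i hi => hG.2 i (mem_insert_of_mem hi)⟩
  obtain ⟨G₀, hG₀, rfl⟩ := mem_image.mp hF
  obtain ⟨hG₀Γ, hG₀D⟩ := mem_inter.mp hG₀
  have hG₀reg := (mem_Dcond.mp hG₀D).1
  let U := {i ∈ S | i < j}.biUnion (inNbrs G₀)
  have hU : #U ≤ k * d := by
    refine (card_biUnion_le_card_mul _ _ _ fun i _ => ((mem_Dreg.mp hG₀reg).2 i).le).trans ?_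
    exact Nat.mul_le_mul_right d (hS ▸ card_filter_le S _)
  have hbad : {G ∈ GammaSet n d δ S (insert j J) ∩ Dcond n d I H | inEdges G W = inEdges G₀ W}
      ⊆ {G ∈ Dcond n d W (inEdges G₀ W) | δ * d ≤ #(inNbrs G j ∩ U)} := by
    intro G hG
    simp only [mem_filter, mem_inter, mem_GammaSet] at hG
    obtain ⟨⟨⟨hGreg, hGΓ⟩, -⟩, hGW⟩ := hG
    refine mem_filter.mpr ⟨mem_Dcond.mpr ⟨hGreg, hGW⟩, ?_⟩
    rw [← commonInNbrsBelow_eq_inNbrs_inter fun v c hc hcj =>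
      inEdges_eq_inEdges_iff.mp hGW v c (by simp [W, hc, hcj])]
    exact hGΓ j (mem_insert_self j J)
  have hclass : Dcond n d W (inEdges G₀ W)
      ⊆ {G ∈ GammaSet n d δ S J ∩ Dcond n d I H | inEdges G W = inEdges G₀ W} := by
    intro G hG
    obtain ⟨hGreg, hGW⟩ := mem_Dcond.mp hG
    refine mem_filter.mpr ⟨mem_inter.mpr ⟨mem_GammaSet_of_inEdges_eq hG₀Γ hGreg hGW hJS ?_,
      mem_Dcond_of_inEdges_eq hG₀D hGreg hGW subset_union_right⟩, hGW⟩
    intro i hi c hc hci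
    simp [W, hc, hci.trans_lt (hJj i hi)]
  calc _ ≤ (#{G ∈ Dcond n d W (inEdges G₀ W) | δ * d ≤ #(inNbrs G j ∩ U)} : ℝ) := by
        exact_mod_cast card_le_card hbad
    _ ≤ _ := card_filter_mul_le_card_inNbrs_inter_le hδ0 hδ1 hd2 hdn
        (hS ▸ card_pos.mpr ⟨j, hjS⟩) hk hjW hU hW
    _ ≤ _ := by gcongr

lemma card_GammaSet_inter_Dcond_le {δ : ℝ} {k : ℕ} {S J I : Finset (Fin n)}
    {H : Finset (Fin n × Fin n)} (hδ0 : 0 < δ) (hδ1 : δ < 1) (hd2 : 2 ≤ d)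
    (hdn : (d : ℝ) ≤ n / 12) (hk : (k : ℝ) ≤ δ * n / (4 * Real.exp 1 * d))
    (hIcard : (#I : ℝ) ≤ n / 8) (hJS : J ⊆ S) (hSI : S ⊆ Iᶜ) (hS : #S = k) :
    (#(GammaSet n d δ S J ∩ Dcond n d I H) : ℝ)
      ≤ ((2 * Real.exp 1 * k * d / (δ * n)) ^ (δ * d)) ^ #J * #(Dcond n d I H) := by
  induction J using Finset.induction_on_max with
  | empty =>
    rw [card_empty, pow_zero, one_mul]
    exact_mod_cast card_le_card inter_subset_right
  | insert j J hJj ih =>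
    have hjS := hJS (mem_insert_self j J)
    have hJS' := (subset_insert j J).trans hJS
    rw [card_insert_of_notMem fun h => lt_irrefl j (hJj j h), pow_succ', mul_assoc]
    calc _ ≤ _ := card_GammaSet_insert_inter_Dcond_le hδ0 hδ1 hd2 hdn hk hIcard hS hjS
          (by simpa using hSI hjS) hJS' hJj
      _ ≤ _ := by gcongr; exact ih hJS'

end RegularDigraph

theorem cor_al_general (n d k ℓ : ℕ) (δ : ℝ) (H : Finset (Fin n × Fin n))
    (I S J : Finset (Fin n))
    (hδ0 : 0 < δ) (hδ1 : δ < 1)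
    (hd2 : 2 ≤ d) (hdn : (d : ℝ) ≤ n / 12)
    (hk : (k : ℝ) ≤ δ * n / (4 * Real.exp 1 * d))
    (hIcard : (I.card : ℝ) ≤ n / 8)
    (hJS : J ⊆ S) (hSI : S ⊆ Iᶜ) (hS : S.card = k) (hJ : J.card = ℓ) :
    ((GammaSet n d δ S J ∩ Dcond n d I H).card : ℝ)
      ≤ ((2 * Real.exp 1 * k * d / (δ * n)) ^ (δ * d)) ^ ℓ *
        ((Dcond n d I H).card : ℝ) :=
  hJ ▸ RegularDigraph.card_GammaSet_inter_Dcond_le hδ0 hδ1 hd2 hdn hk hIcard hJS hSI hS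

/-- Corollary 2.4 of the paper. -/
theorem cor_al (n d k ℓ : ℕ) (δ : ℝ) (H : Finset (Fin n × Fin n))
    (I S J : Finset (Fin n))
    (hδ0 : 0 < δ) (hδ1 : δ < 1)
    (hd2 : 2 ≤ d) (hdn : (d : ℝ) ≤ n / 12)
    (hk1 : 1 ≤ k) (hk : (k : ℝ) ≤ δ * n / (4 * Real.exp 1 * d))
    (hℓ : ℓ ≤ k)
    (hIcard : (I.card : ℝ) ≤ n / 8)
    (hJS : J ⊆ S) (hSI : S ⊆ Iᶜ) (hS : S.card = k) (hJ : J.card = ℓ) :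
    ((GammaSet n d δ S J ∩ Dcond n d I H).card : ℝ)
      ≤ ((2 * Real.exp 1 * k * d / (δ * n)) ^ (δ * d)) ^ ℓ *
        ((Dcond n d I H).card : ℝ) :=
  cor_al_general n d k ℓ δ H I S J hδ0 hδ1 hd2 hdn hk hIcard hJS hSI hS hJ
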